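/- Consider the satellite repeater-chain MDP with state space S = {0,1} × {0,1} × M × M × {1,...,Δmax} (M = {−1} ∪ {1,...,m*}, m* ≥ 1, Δmax ≥ 1, 2·m* ≤ Δmax) and transition kernel defined as follows. Visibilities evolve by independent two-state Markov chains with stochastic matrices P12 and P23; generation may be requested on a link only when it is visible, in which case the link is dropped and regenerated with age 1 with probability p_L and set to −1 otherwise; a swap may be attempted only when both elementary links are active and no generation is requested, it consumes both links (setting their ages to −1), and with probability p_sw it resets the AoE to m12 + m23 while with probability 1 − p_sw the AoE updates to min(Δ+1, Δmax); links not acted upon age by the operator g (g(m) = m+1 if 1 ≤ m ≤ m* and m+1 ≤ m*, g(m) = −1 if 1 ≤ m ≤ m* and m+1 > m*, g(−1) = −1); in any slot with no successful swap the AoE updates to min(Δ+1, Δmax). Assume P12(i,0) > 0 and P23(i,0) > 0 for all i ∈ {0,1}, and p_sw < 1. Then for every stationary deterministic policy π : S → A choosing admissible actions and every initial state s ∈ S, the N-step state distribution under π, with N = m* + (Δmax − 1), assigns strictly positive probability to the state s* = (0, 0, −1, −1, Δmax). Consequently the Markov chain induced by any stationary deterministic policy is unichain. -/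

import Mathlib

open scoped ENNReal

/-- A state of the satellite repeater-chain MDP:
`(v12, v23, m12, m23, Δ)` — the two visibility states, the two elementary link ages,
and the Age of Entanglement of the end-to-end link. -/
abbrev QState : Type := Fin 2 × Fin 2 × ℤ × ℤ × ℤ

/-- An action `(a12, a23, a_sw)`: request generation on link (1,2), on link (2,3),
attempt a swap. -/
abbrev QAction : Type := Bool × Bool × Bool

/-- The elementary-link aging operator with memory cutoff `m*`:
`g m = m + 1` if `1 ≤ m ≤ m*` and `m + 1 ≤ m*`; `g m = -1` if `1 ≤ m ≤ m*` and
`m + 1 > m*`; and `g (-1) = -1`. -/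
def age (mstar : ℕ) (m : ℤ) : ℤ :=
  if 1 ≤ m ∧ m + 1 ≤ (mstar : ℤ) then m + 1 else -1

/-- Drop-then-attempt regeneration of an elementary link: with probability `p_L` the new
link exists with age `1`; otherwise its age is `-1`. -/
noncomputable def genPMF (pL : ℝ≥0∞) (hpL : pL ≤ 1) : PMF ℤ :=
  (PMF.ofFintype (fun b => cond b pL (1 - pL)) (by simp [hpL])).map fun b => if b then 1 else -1

/-- Valid states: `m12, m23 ∈ M = {-1} ∪ {1,…,m*}` and `Δ ∈ {1,…,Δmax}`. -/
def validState (mstar Δmax : ℕ) (s : QState) : Prop :=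
  (s.2.2.1 = -1 ∨ (1 ≤ s.2.2.1 ∧ s.2.2.1 ≤ (mstar : ℤ))) ∧
  (s.2.2.2.1 = -1 ∨ (1 ≤ s.2.2.2.1 ∧ s.2.2.2.1 ≤ (mstar : ℤ))) ∧
  (1 ≤ s.2.2.2.2 ∧ s.2.2.2.2 ≤ (Δmax : ℤ))

/-- Admissibility of action `a` in state `s`: a swap requires both links active and no
generation request; a generation request on a link requires that link to be visible. -/
def admissible (s : QState) (a : QAction) : Prop :=
  (a.2.2 = true → a.1 = false ∧ a.2.1 = false ∧ 1 ≤ s.2.2.1 ∧ 1 ≤ s.2.2.2.1) ∧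
  (a.1 = true → s.1 = 1) ∧
  (a.2.1 = true → s.2.1 = 1)

/-- One-step transition kernel of the satellite repeater-chain MDP.
Visibilities evolve exogenously by the kernels `κ₁, κ₂` (the rows of the stochastic
matrices `P12, P23`). If a swap is attempted, both parent links are consumed; with
probability `p_sw` the AoE resets to `m12 + m23`, otherwise it updates to
`min (Δ+1) Δmax`. If no swap is attempted, each link either regenerates (if requested)
with success probability `p_L` under the drop-then-attempt rule, or ages by the operator
`g`, and the AoE updates to `min (Δ+1) Δmax`. -/
noncomputable def stepKernel (mstar Δmax : ℕ) (κ₁ κ₂ : Fin 2 → PMF (Fin 2))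
    (pL psw : ℝ≥0∞) (hpL : pL ≤ 1) (hpsw : psw ≤ 1) (s : QState) (a : QAction) :
    PMF QState :=
  (κ₁ s.1).bind fun v12' =>
  (κ₂ s.2.1).bind fun v23' =>
    if a.2.2 then
      (PMF.ofFintype (fun b => cond b psw (1 - psw)) (by simp [hpsw])).map fun succ =>
        (v12', v23', -1, -1,
          if succ then s.2.2.1 + s.2.2.2.1 else min (s.2.2.2.2 + 1) (Δmax : ℤ))
    else
      (if a.1 then genPMF pL hpL else PMF.pure (age mstar s.2.2.1)).bind fun m12' =>
      (if a.2.1 then genPMF pL hpL else PMF.pure (age mstar s.2.2.2.1)).map fun m23' =>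
        (v12', v23', m12', m23', min (s.2.2.2.2 + 1) (Δmax : ℤ))

/-- The `n`-step state distribution under a stationary deterministic policy `π`,
obtained by `n`-fold sequential composition (bind) of the one-step kernel with actions
chosen by `π`. -/
noncomputable def nstepDist (K : QState → QAction → PMF QState) (π : QState → QAction) :
    ℕ → QState → PMF QState
  | 0, s => PMF.pure s
  | n + 1, s => (K s (π s)).bind (nstepDist K π n)

/-!
In the first slot, whatever the policy does, both links become invisible with positive
probability, since `P12(i,0), P23(i,0) > 0`. From then on no generation can be requested, so in
every slot the links either age or are consumed by a swap attempt, which fails with probability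
`1 - p_sw > 0` and leaves the AoE on the same path `Δ ↦ min (Δ + 1) Δmax` as aging does. Along
this path every link expires within `m*` slots and the AoE saturates within `Δmax - 1` slots, so
`1 + (m* + Δmax - 2)` slots suffice because `Δmax ≥ 2`.
-/

def aoeUpdate (Δmax : ℕ) (d : ℤ) : ℤ :=
  min (d + 1) Δmax

theorem age_neg_one (mstar : ℕ) : age mstar (-1) = -1 := by
  simp [age]

theorem age_eq_neg_one_or_le_mstar (mstar : ℕ) (m : ℤ) :
    age mstar m = -1 ∨ (1 ≤ age mstar m ∧ age mstar m ≤ (mstar : ℤ)) := by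
  unfold age
  split_ifs <;> omega

theorem age_iterate_succ_eq_neg_one {mstar : ℕ} {m : ℤ} (hm : 1 ≤ m) {n : ℕ}
    (hn : (mstar : ℤ) ≤ m + n) : (age mstar)^[n + 1] m = -1 := by
  induction n generalizing m with
  | zero => simp only [zero_add, Function.iterate_one, age]; rw [if_neg (by omega)]
  | succ n ih =>
    rw [Function.iterate_succ_apply, age]
    split_ifs
    · exact ih (by omega) (by push_cast at hn ⊢; omega)
    · exact Function.iterate_fixed (age_neg_one mstar) _

theorem age_iterate_eq_neg_one {mstar n : ℕ} {m : ℤ}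
    (hm : m = -1 ∨ (1 ≤ m ∧ m ≤ (mstar : ℤ))) (hn : mstar ≤ n) : (age mstar)^[n] m = -1 := by
  rcases hm with rfl | ⟨hpos, hle⟩
  · exact Function.iterate_fixed (age_neg_one mstar) n
  · cases n with
    | zero => omega
    | succ n => exact age_iterate_succ_eq_neg_one hpos (by omega)

theorem aoeUpdate_iterate_eq {Δmax n : ℕ} {d : ℤ} (hd : d ≤ Δmax) (hn : (Δmax : ℤ) ≤ d + n) :
    (aoeUpdate Δmax)^[n] d = Δmax := by
  induction n generalizing d with
  | zero => simp only [Function.iterate_zero, id]; omega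
  | succ n ih =>
    rw [Function.iterate_succ_apply]
    exact ih (min_le_right _ _) (by unfold aoeUpdate; push_cast at hn; omega)

theorem mem_support_genPMF {pL : ℝ≥0∞} {hpL : pL ≤ 1} {m : ℤ}
    (hm : m ∈ (genPMF pL hpL).support) : m = 1 ∨ m = -1 := by
  obtain ⟨b, -, rfl⟩ := (PMF.mem_support_map_iff _ _ _).1 hm
  cases b <;> simp

theorem mem_support_nstepDist_succ {K : QState → QAction → PMF QState} {π : QState → QAction}
    {n : ℕ} {s t : QState} :
    t ∈ (nstepDist K π (n + 1) s).support ↔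
      ∃ s' ∈ (K s (π s)).support, t ∈ (nstepDist K π n s').support :=
  PMF.mem_support_bind_iff _ _ _

section stepKernel

variable {mstar Δmax : ℕ} {κ₁ κ₂ : Fin 2 → PMF (Fin 2)} {pL psw : ℝ≥0∞} {hpL : pL ≤ 1}

/-- `2 m* ≤ Δmax` is what keeps the AoE `m12 + m23` produced by a successful swap within
`{1, …, Δmax}`. -/
theorem validState_of_mem_support_stepKernel (hmstar : 1 ≤ mstar) (hcut : 2 * mstar ≤ Δmax)
    {hpsw : psw ≤ 1} {s s' : QState} {a : QAction} (hs : validState mstar Δmax s)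
    (ha : admissible s a) (hs' : s' ∈ (stepKernel mstar Δmax κ₁ κ₂ pL psw hpL hpsw s a).support) :
    validState mstar Δmax s' := by
  obtain ⟨v₁, v₂, m₁, m₂, d⟩ := s
  simp only [validState, admissible] at hs ha
  have link_valid : ∀ (req : Bool) (m m' : ℤ),
      m' ∈ (if req then genPMF pL hpL else PMF.pure (age mstar m)).support →
        m' = -1 ∨ (1 ≤ m' ∧ m' ≤ (mstar : ℤ)) := by
    rintro (_ | _) m m' hm'
    · rw [if_neg Bool.false_ne_true, PMF.support_pure, Set.mem_singleton_iff] at hm'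
      exact hm' ▸ age_eq_neg_one_or_le_mstar mstar m
    · rw [if_pos rfl] at hm'
      rcases mem_support_genPMF hm' with rfl | rfl <;> omega
  simp only [stepKernel, PMF.mem_support_bind_iff] at hs'
  obtain ⟨v₁', -, v₂', -, hs'⟩ := hs'
  by_cases hsw : a.2.2 = true
  · rw [if_pos hsw, PMF.mem_support_map_iff] at hs'
    obtain ⟨b, -, rfl⟩ := hs'
    have := ha.1 hsw
    cases b <;> refine ⟨Or.inl rfl, Or.inl rfl, ?_⟩ <;>
      simp only [↓reduceIte, Bool.false_eq_true] <;> omega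
  · rw [if_neg hsw, PMF.mem_support_bind_iff] at hs'
    obtain ⟨m₁', hm₁', hs'⟩ := hs'
    obtain ⟨m₂', hm₂', rfl⟩ := (PMF.mem_support_map_iff _ _ _).1 hs'
    exact ⟨link_valid _ _ _ hm₁', link_valid _ _ _ hm₂', by dsimp only; omega⟩

theorem mem_support_stepKernel_of_swap (hκ₁ : ∀ i : Fin 2, 0 < κ₁ i 0)
    (hκ₂ : ∀ i : Fin 2, 0 < κ₂ i 0) (hpsw : psw < 1) {s : QState} {a : QAction}
    (hsw : a.2.2 = true) :
    (0, 0, -1, -1, aoeUpdate Δmax s.2.2.2.2) ∈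
      (stepKernel mstar Δmax κ₁ κ₂ pL psw hpL hpsw.le s a).support := by
  simp only [stepKernel, hsw, if_true, PMF.mem_support_bind_iff, PMF.mem_support_map_iff]
  refine ⟨0, (hκ₁ s.1).ne', 0, (hκ₂ s.2.1).ne', false, ?_, rfl⟩
  exact (PMF.mem_support_ofFintype_iff _ _).2 (tsub_pos_of_lt hpsw).ne'

theorem mem_support_stepKernel_of_not_swap (hκ₁ : ∀ i : Fin 2, 0 < κ₁ i 0)
    (hκ₂ : ∀ i : Fin 2, 0 < κ₂ i 0) {hpsw : psw ≤ 1} {s : QState} {a : QAction}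
    (hsw : a.2.2 = false) {m₁' m₂' : ℤ}
    (hm₁' : m₁' ∈ (if a.1 then genPMF pL hpL else PMF.pure (age mstar s.2.2.1)).support)
    (hm₂' : m₂' ∈ (if a.2.1 then genPMF pL hpL else PMF.pure (age mstar s.2.2.2.1)).support) :
    (0, 0, m₁', m₂', aoeUpdate Δmax s.2.2.2.2) ∈
      (stepKernel mstar Δmax κ₁ κ₂ pL psw hpL hpsw s a).support := by
  simp only [stepKernel, hsw, Bool.false_eq_true, if_false, PMF.mem_support_bind_iff]
  refine ⟨0, (hκ₁ s.1).ne', 0, (hκ₂ s.2.1).ne', m₁', hm₁', ?_⟩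
  exact (PMF.mem_support_map_iff _ _ _).2 ⟨m₂', hm₂', rfl⟩

theorem exists_invisible_mem_support_stepKernel (hκ₁ : ∀ i : Fin 2, 0 < κ₁ i 0)
    (hκ₂ : ∀ i : Fin 2, 0 < κ₂ i 0) (hpsw : psw < 1) (s : QState) (a : QAction) :
    ∃ s' ∈ (stepKernel mstar Δmax κ₁ κ₂ pL psw hpL hpsw.le s a).support,
      s'.1 = 0 ∧ s'.2.1 = 0 := by
  cases hsw : a.2.2
  · obtain ⟨m₁', hm₁'⟩ := PMF.support_nonempty _
    obtain ⟨m₂', hm₂'⟩ := PMF.support_nonempty _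
    exact ⟨_, mem_support_stepKernel_of_not_swap hκ₁ hκ₂ hsw hm₁' hm₂', rfl, rfl⟩
  · exact ⟨_, mem_support_stepKernel_of_swap hκ₁ hκ₂ hpsw hsw, rfl, rfl⟩

theorem target_mem_support_nstepDist_of_invisible (hmstar : 1 ≤ mstar)
    (hcut : 2 * mstar ≤ Δmax) (hκ₁ : ∀ i : Fin 2, 0 < κ₁ i 0) (hκ₂ : ∀ i : Fin 2, 0 < κ₂ i 0)
    (hpsw : psw < 1) {π : QState → QAction}
    (hπ : ∀ s : QState, validState mstar Δmax s → admissible s (π s)) (r : ℕ) {s : QState}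
    (hs : validState mstar Δmax s) (hv₁ : s.1 = 0) (hv₂ : s.2.1 = 0)
    (hm₁ : (age mstar)^[r] s.2.2.1 = -1) (hm₂ : (age mstar)^[r] s.2.2.2.1 = -1)
    (hd : (aoeUpdate Δmax)^[r] s.2.2.2.2 = Δmax) :
    (0, 0, -1, -1, (Δmax : ℤ)) ∈
      (nstepDist (stepKernel mstar Δmax κ₁ κ₂ pL psw hpL hpsw.le) π r s).support := by
  induction r generalizing s with
  | zero =>
    obtain ⟨v₁, v₂, m₁, m₂, d⟩ := s
    simp only [Function.iterate_zero, id] at hv₁ hv₂ hm₁ hm₂ hd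
    subst hv₁ hv₂ hm₁ hm₂ hd
    exact (PMF.mem_support_pure_iff _ _).2 rfl
  | succ r ih =>
    have ha := hπ s hs
    have hreq₁ : (π s).1 = false := Bool.eq_false_iff.2 fun h => zero_ne_one (hv₁ ▸ ha.2.1 h)
    have hreq₂ : (π s).2.1 = false := Bool.eq_false_iff.2 fun h => zero_ne_one (hv₂ ▸ ha.2.2 h)
    rw [Function.iterate_succ_apply] at hm₁ hm₂ hd
    rw [mem_support_nstepDist_succ]
    cases hsw : (π s).2.2
    · have hmem : (0, 0, age mstar s.2.2.1, age mstar s.2.2.2.1, aoeUpdate Δmax s.2.2.2.2) ∈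
          (stepKernel mstar Δmax κ₁ κ₂ pL psw hpL hpsw.le s (π s)).support :=
        mem_support_stepKernel_of_not_swap hκ₁ hκ₂ hsw (by simp [hreq₁]) (by simp [hreq₂])
      have hvalid := validState_of_mem_support_stepKernel hmstar hcut hs ha hmem
      exact ⟨_, hmem, ih hvalid rfl rfl hm₁ hm₂ hd⟩
    · have hmem : _ ∈ (stepKernel mstar Δmax κ₁ κ₂ pL psw hpL hpsw.le s (π s)).support :=
        mem_support_stepKernel_of_swap hκ₁ hκ₂ hpsw hsw
      have hvalid := validState_of_mem_support_stepKernel hmstar hcut hs ha hmem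
      have hneg := Function.iterate_fixed (age_neg_one mstar) r
      exact ⟨_, hmem, ih hvalid rfl rfl hneg hneg hd⟩

end stepKernel

theorem reachable_invisible_empty_maxAoE_general (mstar Δmax : ℕ)
    (hmstar : 1 ≤ mstar) (hcut : 2 * mstar ≤ Δmax)
    (κ₁ κ₂ : Fin 2 → PMF (Fin 2))
    (hκ₁ : ∀ i : Fin 2, 0 < κ₁ i 0) (hκ₂ : ∀ i : Fin 2, 0 < κ₂ i 0)
    (pL psw : ℝ≥0∞) (hpL : pL ≤ 1) (hpsw : psw < 1)
    (π : QState → QAction)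
    (hπ : ∀ s : QState, validState mstar Δmax s → admissible s (π s)) :
    ∀ s : QState, validState mstar Δmax s →
      0 < nstepDist (stepKernel mstar Δmax κ₁ κ₂ pL psw hpL hpsw.le) π
            (mstar + (Δmax - 1)) s (0, 0, -1, -1, (Δmax : ℤ)) := by
  intro s hs
  obtain ⟨s₁, hs₁, hv₁, hv₂⟩ :=
    exists_invisible_mem_support_stepKernel (mstar := mstar) (Δmax := Δmax) (hpL := hpL)
      hκ₁ hκ₂ hpsw s (π s)
  have hvalid₁ := validState_of_mem_support_stepKernel hmstar hcut hs (hπ s hs) hs₁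
  -- after the first slot `r = m* + Δmax - 2 ≥ max m* (Δmax - 1)` slots remain
  rw [PMF.apply_pos_iff, show mstar + (Δmax - 1) = (mstar + Δmax - 2) + 1 by omega,
    mem_support_nstepDist_succ]
  refine ⟨s₁, hs₁, target_mem_support_nstepDist_of_invisible hmstar hcut hκ₁ hκ₂ hpsw hπ _
    hvalid₁ hv₁ hv₂ ?_ ?_ ?_⟩
  · exact age_iterate_eq_neg_one hvalid₁.1 (by omega)
  · exact age_iterate_eq_neg_one hvalid₁.2.1 (by omega)
  · exact aoeUpdate_iterate_eq hvalid₁.2.2.2 (by have := hvalid₁.2.2.1; omega)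

/-- In the satellite repeater-chain MDP with `m* ≥ 1`, `Δmax ≥ 1`,
`2·m* ≤ Δmax`, visibility kernels with `P12(i,0) > 0` and `P23(i,0) > 0` for all `i`,
and swap success probability `p_sw < 1`, for every stationary deterministic policy `π`
choosing admissible actions and every (valid) initial state `s`, the `N`-step state
distribution under `π`, with `N = m* + (Δmax − 1)`, assigns strictly positive
probability to the state `s* = (0, 0, −1, −1, Δmax)`.  (Consequently the Markov chain
induced by any stationary deterministic policy is unichain.) -/
theorem reachable_invisible_empty_maxAoE (mstar Δmax : ℕ)
    (hmstar : 1 ≤ mstar) (hΔmax : 1 ≤ Δmax) (hcut : 2 * mstar ≤ Δmax)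
    (κ₁ κ₂ : Fin 2 → PMF (Fin 2))
    (hκ₁ : ∀ i : Fin 2, 0 < κ₁ i 0) (hκ₂ : ∀ i : Fin 2, 0 < κ₂ i 0)
    (pL psw : ℝ≥0∞) (hpL : pL ≤ 1) (hpsw : psw < 1)
    (π : QState → QAction)
    (hπ : ∀ s : QState, validState mstar Δmax s → admissible s (π s)) :
    ∀ s : QState, validState mstar Δmax s →
      0 < nstepDist (stepKernel mstar Δmax κ₁ κ₂ pL psw hpL hpsw.le) π
            (mstar + (Δmax - 1)) s (0, 0, -1, -1, (Δmax : ℤ)) :=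
  reachable_invisible_empty_maxAoE_general mstar Δmax hmstar hcut κ₁ κ₂ hκ₁ hκ₂ pL psw hpL hpsw π hπ
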